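/- Let A be a reduced commutative Z-graded algebra over a commutative ring k. Then every grouplike element of the coring A ⊗ k[X, X^{-1}] is of the form Σ_{i=1}^n e_i ⊗ X^{d_i}, where 1 = e_1 + ⋯ + e_n is a decomposition into orthogonal idempotents and d_i ∈ Z; i.e., the natural map from continuous functions Spec(A) → Z (Zariski topology on Spec(A), discrete on Z) to G(A ⊗ k[X,X^{-1}]) is a bijection. -/

import Mathlib

open TensorProduct LaurentPolynomial

universe u

namespace GradedGrouplike

variable {k : Type u} [CommRing k]

/-- The comultiplication of the Hopf algebra `H = k[X, X⁻¹] = k ℤ`, `Δ(Xⁿ) = Xⁿ ⊗ Xⁿ`. -/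
noncomputable def comulL :
    LaurentPolynomial k →ₗ[k] LaurentPolynomial k ⊗[k] LaurentPolynomial k :=
  Finsupp.lsum k (fun n : ℤ =>
    LinearMap.toSpanSingleton k _ ((T n : LaurentPolynomial k) ⊗ₜ[k] (T n : LaurentPolynomial k))) ∘ₗ
    (AddMonoidAlgebra.coeffLinearEquiv k).toLinearMap

/-- The counit of `k[X, X⁻¹]`, `ε(Xⁿ) = 1`. -/
noncomputable def counitL : LaurentPolynomial k →ₗ[k] k :=
  Finsupp.lsum k (fun _ : ℤ => LinearMap.toSpanSingleton k k 1) ∘ₗ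
    (AddMonoidAlgebra.coeffLinearEquiv k).toLinearMap

variable {A : Type u} [CommRing A] [Algebra k A]

/-- `x ∈ A ⊗ k[X,X⁻¹]` is a grouplike element of the coring `A ⊗ k[X,X⁻¹]` associated to
the coaction `ρ` (written via the identification
`(A ⊗ H) ⊗_A (A ⊗ H) ≅ A ⊗ H ⊗ H`, cf. the Harrison 1-cocycle condition). -/
noncomputable def IsGrouplikeL (ρ : A →ₗ[k] A ⊗[k] LaurentPolynomial k)
    (x : A ⊗[k] LaurentPolynomial k) : Prop :=
  (TensorProduct.assoc k A (LaurentPolynomial k) (LaurentPolynomial k)).symm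
      ((LinearMap.lTensor A comulL) x)
    = (LinearMap.rTensor (LaurentPolynomial k) (LinearMap.mulLeft k x))
        ((LinearMap.rTensor (LaurentPolynomial k) ρ) x) ∧
  (TensorProduct.rid k A) ((LinearMap.lTensor A counitL) x) = 1

/-- The coaction `A → A ⊗ k[X,X⁻¹]` of a `ℤ`-grading: `a_n ↦ a_n ⊗ Xⁿ` for `a_n`
homogeneous of degree `n`. -/
noncomputable def gradedCoaction (𝒜 : ℤ → Submodule k A) [GradedAlgebra 𝒜] :
    A →ₗ[k] A ⊗[k] LaurentPolynomial k :=
  (DirectSum.toModule k ℤ (A ⊗[k] LaurentPolynomial k) (fun n =>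
    { toFun := fun (a : ↥(𝒜 n)) => (↑a : A) ⊗ₜ[k] (T n : LaurentPolynomial k)
      map_add' := fun a b => by simp [TensorProduct.add_tmul]
      map_smul' := fun t a => by simp [TensorProduct.smul_tmul'] })) ∘ₗ
  (DirectSum.decomposeAlgEquiv 𝒜).toLinearMap

end GradedGrouplike

/-!
Write `x = Σₙ cₙ ⊗ Xⁿ`. The grouplike condition says exactly that `x · ρ(cₙ) = cₙ ⊗ Xⁿ` for all
`n` and `Σₙ cₙ = 1`. Modulo a homogeneous prime `Q` the ring `(A/Q)[X, X⁻¹]` is a domain, so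
comparing the largest and the smallest exponents in `x · ρ(cₙ) = cₙ Xⁿ` shows that `ρ(cₙ)` is
concentrated in degree `0` as soon as `cₙ ∉ Q`. The homogeneous primes of a `ℤ`-graded ring cut
out its nilradical, which is zero, so every `cₙ` has degree `0`; then `ρ(cₙ) = cₙ ⊗ 1` and the
same identity reads `c_p cₙ = δ_{pn} cₙ`. Conversely an idempotent `e` has degree `0`, since
`e (1 - e) = 0` puts `e` or `1 - e` into every homogeneous prime.
-/

theorem Finset.sum_comp_equivFin_symm {α M : Type*} [AddCommMonoid M] (s : Finset α)
    (f : α → M) : ∑ i, f (s.equivFin.symm i) = ∑ a ∈ s, f a :=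
  (Equiv.sum_comp s.equivFin.symm (f ·)).trans (s.sum_coe_sort f)

namespace AddMonoidAlgebra

variable {R G : Type*} [Semiring R] [NoZeroDivisors R]
  [AddCommMonoid G] [LinearOrder G] [IsOrderedCancelAddMonoid G] {f g : R[G]}

theorem max'_add_max'_mem_support_mul (hf : f.coeff.support.Nonempty)
    (hg : g.coeff.support.Nonempty) :
    f.coeff.support.max' hf + g.coeff.support.max' hg ∈ (f * g).coeff.support := by
  have hunique : UniqueAdd f.coeff.support g.coeff.support
      (f.coeff.support.max' hf) (g.coeff.support.max' hg) := fun a b ha hb hab =>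
    (add_eq_add_iff_eq_and_eq (Finset.le_max' _ a ha) (Finset.le_max' _ b hb)).mp hab
  rw [Finsupp.mem_support_iff, coeff_mul_add_of_uniqueAdd hunique]
  exact mul_ne_zero (Finsupp.mem_support_iff.mp (Finset.max'_mem _ hf))
    (Finsupp.mem_support_iff.mp (Finset.max'_mem _ hg))

theorem min'_add_min'_mem_support_mul (hf : f.coeff.support.Nonempty)
    (hg : g.coeff.support.Nonempty) :
    f.coeff.support.min' hf + g.coeff.support.min' hg ∈ (f * g).coeff.support := by
  have hunique : UniqueAdd f.coeff.support g.coeff.support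
      (f.coeff.support.min' hf) (g.coeff.support.min' hg) := fun a b ha hb hab =>
    ((add_eq_add_iff_eq_and_eq (Finset.min'_le _ a ha) (Finset.min'_le _ b hb)).mp hab.symm).imp
      Eq.symm Eq.symm
  rw [Finsupp.mem_support_iff, coeff_mul_add_of_uniqueAdd hunique]
  exact mul_ne_zero (Finsupp.mem_support_iff.mp (Finset.min'_mem _ hf))
    (Finsupp.mem_support_iff.mp (Finset.min'_mem _ hg))

theorem support_subset_zero_of_mul_eq_single {n : G} {a : R} (hn : n ∈ f.coeff.support)
    (h : f * g = single n a) : g.coeff.support ⊆ {0} := by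
  intro m hm
  have hf : f.coeff.support.Nonempty := ⟨n, hn⟩
  have hg : g.coeff.support.Nonempty := ⟨m, hm⟩
  have hsupp : (f * g).coeff.support ⊆ {n} := h ▸ Finsupp.support_single_subset
  have hmax := Finset.mem_singleton.mp (hsupp (max'_add_max'_mem_support_mul hf hg))
  have hmin := Finset.mem_singleton.mp (hsupp (min'_add_min'_mem_support_mul hf hg))
  have h1 : g.coeff.support.max' hg ≤ 0 := le_of_add_le_add_left (a := n) <| by
    calc n + _ ≤ f.coeff.support.max' hf + g.coeff.support.max' hg := by
          gcongr; exact Finset.le_max' _ n hn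
      _ = n + 0 := by rw [hmax, add_zero]
  have h2 : 0 ≤ g.coeff.support.min' hg := le_of_add_le_add_left (a := n) <| by
    calc n + 0 = f.coeff.support.min' hf + g.coeff.support.min' hg := by rw [hmin, add_zero]
      _ ≤ n + _ := by gcongr; exact Finset.min'_le _ n hn
  exact Finset.mem_singleton.mpr (le_antisymm ((Finset.le_max' _ m hm).trans h1)
    (h2.trans (Finset.min'_le _ m hm)))

end AddMonoidAlgebra

section ReducedGraded

variable {ι σ A : Type*} [CommRing A] [AddCommMonoid ι] [LinearOrder ι]
  [IsOrderedCancelAddMonoid ι] [SetLike σ A] [AddSubmonoidClass σ A] (𝒜 : ι → σ) [GradedRing 𝒜]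
  [IsReduced A]

theorem eq_zero_of_forall_isHomogeneous_isPrime {a : A}
    (h : ∀ Q : Ideal A, Q.IsHomogeneous 𝒜 → Q.IsPrime → a ∈ Q) : a = 0 := by
  have ha : a ∈ (⊥ : Ideal A).radical := by
    rw [(Ideal.IsHomogeneous.bot 𝒜).radical_eq]
    exact Submodule.mem_sInf.mpr fun Q ⟨hQ, _, hQp⟩ => h Q hQ hQp
  exact (nilradical_eq_zero A).le ha

theorem mem_zero_of_forall_isHomogeneous_isPrime {a : A}
    (h : ∀ Q : Ideal A, Q.IsHomogeneous 𝒜 → Q.IsPrime → ∀ m ≠ 0,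
      (DirectSum.decompose 𝒜 a m : A) ∈ Q) : a ∈ 𝒜 0 := by
  classical
  rw [← DirectSum.sum_support_decompose 𝒜 a]
  refine sum_mem fun m _ => ?_
  obtain rfl | hm := eq_or_ne m 0
  · exact SetLike.coe_mem _
  · rw [eq_zero_of_forall_isHomogeneous_isPrime 𝒜 fun Q hQ hQp => h Q hQ hQp m hm]
    exact zero_mem _

theorem IsIdempotentElem.mem_zero {e : A} (he : IsIdempotentElem e) : e ∈ 𝒜 0 := by
  refine mem_zero_of_forall_isHomogeneous_isPrime 𝒜 fun Q hQ hQp m hm => ?_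
  have hmul : e * (1 - e) ∈ Q := by
    rw [mul_sub, mul_one, he.eq, sub_self]
    exact Q.zero_mem
  rcases hQp.mem_or_mem hmul with he' | he'
  · exact hQ m he'
  · have hcomp := hQ m he'
    rwa [← GradedRing.proj_apply, map_sub, GradedRing.proj_apply, GradedRing.proj_apply,
      DirectSum.decompose_of_mem_ne 𝒜 (SetLike.one_mem_graded 𝒜) hm.symm, zero_sub,
      neg_mem_iff] at hcomp

end ReducedGraded

namespace GradedGrouplike

open AddMonoidAlgebra

variable {k : Type u} [CommRing k]

section TensorLaurent

variable {M N : Type u} [CommRing M] [Algebra k M] [CommRing N] [Algebra k N]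

theorem scalarTensorEquiv_tmul_T (m : M) (n : ℤ) :
    scalarTensorEquiv k M (m ⊗ₜ[k] (T n : LaurentPolynomial k)) = single n m := by
  rw [T, ← scalarTensorEquiv_symm_single (R := k), AlgEquiv.apply_symm_apply]

theorem coeff_scalarTensorEquiv_sum_tmul_T (S : Finset ℤ) (u : ℤ → M) (m : ℤ) :
    (scalarTensorEquiv k M (∑ n ∈ S, u n ⊗ₜ[k] (T n : LaurentPolynomial k))).coeff m
      = if m ∈ S then u m else 0 := by
  simp only [map_sum, scalarTensorEquiv_tmul_T, coeff_sum, Finsupp.finsetSum_apply,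
    coeff_single, Finsupp.single_apply, Finset.sum_ite_eq']

theorem eq_sum_coeff_tmul_T (x : M ⊗[k] LaurentPolynomial k) :
    x = ∑ n ∈ (scalarTensorEquiv k M x).coeff.support,
      (scalarTensorEquiv k M x).coeff n ⊗ₜ[k] (T n : LaurentPolynomial k) := by
  refine (scalarTensorEquiv k M).injective (AddMonoidAlgebra.ext (Finsupp.ext fun m => ?_))
  rw [coeff_scalarTensorEquiv_sum_tmul_T]
  split_ifs with hm
  · rfl
  · exact Finsupp.notMem_support_iff.mp hm

theorem coeff_scalarTensorEquiv_rTensor (φ : M →ₗ[k] N) (x : M ⊗[k] LaurentPolynomial k)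
    (m : ℤ) :
    (scalarTensorEquiv k N (φ.rTensor _ x)).coeff m = φ ((scalarTensorEquiv k M x).coeff m) := by
  conv_lhs => rw [eq_sum_coeff_tmul_T x, map_sum]
  simp only [LinearMap.rTensor_tmul]
  rw [coeff_scalarTensorEquiv_sum_tmul_T]
  split_ifs with hm
  · rfl
  · rw [Finsupp.notMem_support_iff.mp hm, map_zero]

theorem comulL_T (n : ℤ) :
    comulL (k := k) (T n) = (T n : LaurentPolynomial k) ⊗ₜ[k] (T n : LaurentPolynomial k) := by
  conv_lhs => rw [T]
  simp [comulL, -single_eq_C_mul_T]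

theorem counitL_T (n : ℤ) : counitL (k := k) (T n) = 1 := by
  rw [T]; simp [counitL, -single_eq_C_mul_T]

theorem coeff_scalarTensorEquiv_assoc_symm_lTensor_comulL (x : M ⊗[k] LaurentPolynomial k)
    (m : ℤ) :
    (scalarTensorEquiv k (M ⊗[k] LaurentPolynomial k)
        ((TensorProduct.assoc k M _ _).symm (comulL.lTensor M x))).coeff m
      = (scalarTensorEquiv k M x).coeff m ⊗ₜ[k] (T m : LaurentPolynomial k) := by
  conv_lhs => rw [eq_sum_coeff_tmul_T x, map_sum, map_sum]
  simp only [LinearMap.lTensor_tmul, comulL_T, TensorProduct.assoc_symm_tmul]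
  rw [coeff_scalarTensorEquiv_sum_tmul_T]
  split_ifs with hm
  · rfl
  · rw [Finsupp.notMem_support_iff.mp hm, zero_tmul]

theorem rid_lTensor_counitL (x : M ⊗[k] LaurentPolynomial k) :
    TensorProduct.rid k M (counitL.lTensor M x)
      = ∑ n ∈ (scalarTensorEquiv k M x).coeff.support, (scalarTensorEquiv k M x).coeff n := by
  conv_lhs => rw [eq_sum_coeff_tmul_T x]
  simp only [map_sum, LinearMap.lTensor_tmul, counitL_T, TensorProduct.rid_tmul, one_smul]

end TensorLaurent

section Coaction

variable {A : Type u} [CommRing A] [Algebra k A] (𝒜 : ℤ → Submodule k A) [GradedAlgebra 𝒜]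

theorem gradedCoaction_of_mem {a : A} {m : ℤ} (ha : a ∈ 𝒜 m) :
    gradedCoaction 𝒜 a = a ⊗ₜ[k] (T m : LaurentPolynomial k) := by
  rw [gradedCoaction, LinearMap.comp_apply, AlgEquiv.toLinearMap_apply,
    DirectSum.decomposeAlgEquiv_apply, DirectSum.decompose_of_mem 𝒜 ha, ← DirectSum.lof_eq_of k,
    DirectSum.toModule_lof]
  rfl

theorem coeff_scalarTensorEquiv_gradedCoaction (a : A) (m : ℤ) :
    (scalarTensorEquiv k A (gradedCoaction 𝒜 a)).coeff m = DirectSum.decompose 𝒜 a m := by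
  classical
  conv_lhs => rw [← DirectSum.sum_support_decompose 𝒜 a, map_sum]
  simp only [fun n => gradedCoaction_of_mem 𝒜 (SetLike.coe_mem (DirectSum.decompose 𝒜 a n))]
  rw [coeff_scalarTensorEquiv_sum_tmul_T]
  split_ifs with hm
  · rfl
  · rw [DFinsupp.notMem_support_iff.mp hm, ZeroMemClass.coe_zero]

end Coaction

section Grouplike

variable {A : Type u} [CommRing A] [Algebra k A] {ρ : A →ₗ[k] A ⊗[k] LaurentPolynomial k}
  {x : A ⊗[k] LaurentPolynomial k}

theorem IsGrouplikeL.mul_coaction_coeff (hx : IsGrouplikeL ρ x) (n : ℤ) :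
    x * ρ ((scalarTensorEquiv k A x).coeff n)
      = (scalarTensorEquiv k A x).coeff n ⊗ₜ[k] (T n : LaurentPolynomial k) := by
  have h := congrArg (fun z => (scalarTensorEquiv k _ z).coeff n) hx.1
  simp only [coeff_scalarTensorEquiv_assoc_symm_lTensor_comulL, coeff_scalarTensorEquiv_rTensor,
    LinearMap.mulLeft_apply] at h
  exact h.symm

theorem IsGrouplikeL.sum_coeff (hx : IsGrouplikeL ρ x) :
    ∑ n ∈ (scalarTensorEquiv k A x).coeff.support, (scalarTensorEquiv k A x).coeff n = 1 :=
  (rid_lTensor_counitL x).symm.trans hx.2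

end Grouplike

section Reduced

variable {A : Type u} [CommRing A] [Algebra k A] {𝒜 : ℤ → Submodule k A} [GradedAlgebra 𝒜]
  [IsReduced A] {x : A ⊗[k] LaurentPolynomial k}

theorem IsGrouplikeL.coeff_mem_zero (hx : IsGrouplikeL (gradedCoaction 𝒜) x) (n : ℤ) :
    (scalarTensorEquiv k A x).coeff n ∈ 𝒜 0 := by
  set c := (scalarTensorEquiv k A x).coeff
  refine mem_zero_of_forall_isHomogeneous_isPrime 𝒜 fun Q hQ hQp m hm => ?_
  by_cases hcn : c n ∈ Q
  · exact hQ m hcn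
  let π := mapRingHom ℤ (Ideal.Quotient.mk Q)
  have hprod : π (scalarTensorEquiv k A x) * π (scalarTensorEquiv k A (gradedCoaction 𝒜 (c n)))
      = single n (Ideal.Quotient.mk Q (c n)) := by
    rw [← map_mul, ← map_mul, hx.mul_coaction_coeff n, scalarTensorEquiv_tmul_T]
    exact map_single _ _ _
  have hn : n ∈ (π (scalarTensorEquiv k A x)).coeff.support := by
    simpa [π, Ideal.Quotient.eq_zero_iff_mem] using hcn
  by_contra hmQ
  refine hm (Finset.mem_singleton.mp (support_subset_zero_of_mul_eq_single hn hprod ?_))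
  simpa [π, coeff_scalarTensorEquiv_gradedCoaction, Ideal.Quotient.eq_zero_iff_mem] using hmQ

theorem IsGrouplikeL.coeff_mul_coeff (hx : IsGrouplikeL (gradedCoaction 𝒜) x) (p n : ℤ) :
    (scalarTensorEquiv k A x).coeff p * (scalarTensorEquiv k A x).coeff n
      = if n = p then (scalarTensorEquiv k A x).coeff n else 0 := by
  have h := congrArg (fun z => (scalarTensorEquiv k A z).coeff p) (hx.mul_coaction_coeff n)
  simpa only [gradedCoaction_of_mem 𝒜 (hx.coeff_mem_zero n), map_mul, scalarTensorEquiv_tmul_T,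
    coeff_mul_single_zero, coeff_single, Finsupp.single_apply] using h

theorem IsGrouplikeL.exists_eq_sum_tmul_T (hx : IsGrouplikeL (gradedCoaction 𝒜) x) :
    ∃ (n : ℕ) (e : Fin n → A) (d : Fin n → ℤ),
      (∀ i, IsIdempotentElem (e i)) ∧ (∀ i j, i ≠ j → e i * e j = 0) ∧ (∑ i, e i = 1) ∧
        x = ∑ i, e i ⊗ₜ[k] (T (d i) : LaurentPolynomial k) := by
  set S := (scalarTensorEquiv k A x).coeff.support
  set c := (scalarTensorEquiv k A x).coeff
  let d : Fin S.card → ℤ := fun i => S.equivFin.symm i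
  have hd : d.Injective := fun i j hij => S.equivFin.symm.injective (Subtype.ext hij)
  refine ⟨S.card, fun i => c (d i), d, fun i => ?_, fun i j hij => ?_, ?_, ?_⟩
  · exact (hx.coeff_mul_coeff _ _).trans (if_pos rfl)
  · exact (hx.coeff_mul_coeff _ _).trans (if_neg (hd.ne hij.symm))
  · exact (S.sum_comp_equivFin_symm c).trans hx.sum_coeff
  · exact (eq_sum_coeff_tmul_T x).trans (S.sum_comp_equivFin_symm (fun n => c n ⊗ₜ T n)).symm

theorem isGrouplikeL_sum_tmul_T {ι : Type*} [Fintype ι] (e : ι → A) (d : ι → ℤ)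
    (he : ∀ i, IsIdempotentElem (e i)) (horth : ∀ i j, i ≠ j → e i * e j = 0)
    (hsum : ∑ i, e i = 1) :
    IsGrouplikeL (gradedCoaction 𝒜) (∑ i, e i ⊗ₜ[k] (T (d i) : LaurentPolynomial k)) := by
  have hmul : ∀ i, (∑ j, e j ⊗ₜ[k] (T (d j) : LaurentPolynomial k)) * gradedCoaction 𝒜 (e i)
      = e i ⊗ₜ[k] (T (d i) : LaurentPolynomial k) := by
    intro i
    rw [gradedCoaction_of_mem 𝒜 ((he i).mem_zero 𝒜), Finset.sum_mul,
      Finset.sum_eq_single_of_mem i (Finset.mem_univ i)]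
    · rw [Algebra.TensorProduct.tmul_mul_tmul, (he i).eq, ← T_add, add_zero]
    · intro j _ hji
      rw [Algebra.TensorProduct.tmul_mul_tmul, horth j i hji, zero_tmul]
  refine ⟨?_, ?_⟩
  · simp only [map_sum, LinearMap.lTensor_tmul, comulL_T, TensorProduct.assoc_symm_tmul,
      LinearMap.rTensor_tmul, LinearMap.mulLeft_apply, hmul]
  · simp only [map_sum, LinearMap.lTensor_tmul, counitL_T, TensorProduct.rid_tmul, one_smul, hsum]

end Reduced

end GradedGrouplike

open GradedGrouplike in
/-- let `A` be a reduced commutative `ℤ`-graded `k`-algebra. Then the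
grouplike elements of the coring `A ⊗ k[X, X⁻¹]` are exactly the elements
`Σᵢ eᵢ ⊗ X^{dᵢ}` for a decomposition `1 = e₁ + ⋯ + e_n` into orthogonal idempotents and
integers `dᵢ`; i.e. the natural map from continuous functions `Spec A → ℤ` to
`G(A ⊗ k[X,X⁻¹])` is a bijection. -/
theorem grouplikes_of_reduced_graded
    {k : Type u} [CommRing k] {A : Type u} [CommRing A] [Algebra k A]
    (𝒜 : ℤ → Submodule k A) [GradedAlgebra 𝒜] [IsReduced A]
    (x : A ⊗[k] LaurentPolynomial k) :
    IsGrouplikeL (gradedCoaction 𝒜) x ↔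
      ∃ (n : ℕ) (e : Fin n → A) (d : Fin n → ℤ),
        (∀ i, IsIdempotentElem (e i)) ∧
        (∀ i j, i ≠ j → e i * e j = 0) ∧
        (∑ i, e i = 1) ∧
        x = ∑ i, (e i) ⊗ₜ[k] (T (d i) : LaurentPolynomial k) := by
  refine ⟨IsGrouplikeL.exists_eq_sum_tmul_T, ?_⟩
  rintro ⟨n, e, d, he, horth, hsum, rfl⟩
  exact isGrouplikeL_sum_tmul_T e d he horth hsum
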